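/- Let G=(V,E) be a finite simple graph, ω: E → ℚ an edge-weight function, and k a positive integer. Let χ be a c-coloring of G and let v, w ∈ V be weighted twins (i.e., N(v)\{w} = N(w)\{v} and ω({v,x}) = ω({w,x}) for every x ∈ N(v)\{w}) with χ(v) = χ(w). If there is no improving k-neighbor χ' of χ with v ∈ D_flip(χ,χ'), then there is no improving k-neighbor χ̃ of χ with w ∈ D_flip(χ,χ̃). -/

import Mathlib

open Finset
open scoped Classical

/-- The finset of properly colored edges of `G` under the coloring `χ`. -/
noncomputable def properEdges {V : Type*} [Fintype V] {α : Type*}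
    (G : SimpleGraph V) (χ : V → α) : Finset (Sym2 V) :=
  G.edgeFinset.filter fun e => ¬ (Sym2.map χ e).IsDiag

/-- The flip between two colorings: the set of vertices where they differ. -/
noncomputable def flipSet {V : Type*} [Fintype V] {α : Type*}
    (χ χ' : V → α) : Finset V :=
  univ.filter fun v => χ v ≠ χ' v

/-- `χ'` is an improving `k`-neighbor of `χ` with respect to the edge
weights `ω`. -/
def IsImprovingKNeighbor {V : Type*} [Fintype V] {c : ℕ}
    (G : SimpleGraph V) (ω : Sym2 V → ℚ) (k : ℕ) (χ χ' : V → Fin c) : Prop :=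
  (flipSet χ χ').card ≤ k ∧
    (∑ e ∈ properEdges G χ, ω e) < (∑ e ∈ properEdges G χ', ω e)

/-!
Swapping two weighted twins `v`, `w` is an automorphism of the weighted graph, and it fixes `χ`
because `χ v = χ w`. Precomposing an improving `k`-neighbour that flips `w` with this swap
therefore gives an improving `k`-neighbour that flips `v`.
-/

section Transport

variable {V W α : Type*} [Fintype V] [Fintype W]

@[simp]
theorem mem_properEdges {G : SimpleGraph V} {χ : V → α} {a b : V} :
    s(a, b) ∈ properEdges G χ ↔ G.Adj a b ∧ χ a ≠ χ b := by
  simp [properEdges]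

@[simp]
theorem mem_flipSet {χ χ' : V → α} {x : V} : x ∈ flipSet χ χ' ↔ χ x ≠ χ' x := by
  simp [flipSet]

theorem mem_edgeSet_of_mem_properEdges {G : SimpleGraph V} {χ : V → α} {e : Sym2 V}
    (he : e ∈ properEdges G χ) : e ∈ G.edgeSet :=
  SimpleGraph.mem_edgeFinset.mp (filter_subset _ _ he)

theorem card_flipSet_comp (σ : V ≃ W) (χ χ' : W → α) :
    (flipSet (χ ∘ σ) (χ' ∘ σ)).card = (flipSet χ χ').card :=
  card_equiv σ fun _ => by simp

theorem sum_properEdges_comp_iso {M : Type*} [AddCommMonoid M] {G : SimpleGraph V}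
    {G' : SimpleGraph W} (φ : G ≃g G') (χ : W → α) (f : Sym2 W → M) :
    ∑ e ∈ properEdges G (χ ∘ φ), f (e.map φ) = ∑ e ∈ properEdges G' χ, f e := by
  refine sum_nbij' (Sym2.map φ) (Sym2.map φ.symm) ?_ ?_ ?_ ?_ fun _ _ => rfl <;>
    intro e _ <;> induction e using Sym2.ind <;> simp_all [SimpleGraph.Iso.map_adj_iff]

theorem IsImprovingKNeighbor.comp_iso {c k : ℕ} {G : SimpleGraph V} {ω : Sym2 V → ℚ}
    {χ χ' : V → Fin c} (φ : G ≃g G) (hω : ∀ e ∈ G.edgeSet, ω (e.map φ) = ω e)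
    (hχ : χ ∘ φ = χ) (h : IsImprovingKNeighbor G ω k χ χ') :
    IsImprovingKNeighbor G ω k χ (χ' ∘ φ) := by
  have hsum : ∑ e ∈ properEdges G (χ' ∘ φ), ω e = ∑ e ∈ properEdges G χ', ω e := by
    rw [← sum_properEdges_comp_iso φ χ' ω]
    exact sum_congr rfl fun e he => (hω e (mem_edgeSet_of_mem_properEdges he)).symm
  refine ⟨?_, ?_⟩
  · rw [← hχ]; exact (card_flipSet_comp φ.toEquiv χ χ').trans_le h.1
  · rw [hsum]; exact h.2

end Transport

namespace SimpleGraph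

variable {V : Type*} {G : SimpleGraph V} {v w : V}

def AreTwins (G : SimpleGraph V) (v w : V) : Prop :=
  G.neighborSet v \ {w} = G.neighborSet w \ {v}

theorem AreTwins.adj_iff (h : G.AreTwins v w) {x : V} (hxv : x ≠ v) (hxw : x ≠ w) :
    G.Adj v x ↔ G.Adj w x := by
  simpa [hxv, hxw] using Set.ext_iff.mp h x

variable [DecidableEq V]

theorem AreTwins.adj_swap (h : G.AreTwins v w) {a b : V} (hab : G.Adj a b) :
    G.Adj (Equiv.swap v w a) (Equiv.swap v w b) := by
  have twin := fun x => h.adj_iff (x := x)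
  have := G.ne_of_adj hab
  simp only [Equiv.swap_apply_def]
  split_ifs <;> subst_vars <;> grind [Adj.symm]

def AreTwins.swapIso (h : G.AreTwins v w) : G ≃g G where
  toEquiv := Equiv.swap v w
  map_rel_iff' := ⟨fun hab => by simpa using h.adj_swap hab, h.adj_swap⟩

@[simp]
theorem AreTwins.coe_swapIso (h : G.AreTwins v w) : ⇑h.swapIso = Equiv.swap v w :=
  rfl

theorem AreTwins.weight_map_swap {β : Type*} {ω : Sym2 V → β} (hN : G.AreTwins v w)
    (hω : ∀ x ∈ G.neighborSet v \ {w}, ω s(v, x) = ω s(w, x)) {e : Sym2 V} (he : e ∈ G.edgeSet) :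
    ω (e.map (Equiv.swap v w)) = ω e := by
  induction e using Sym2.ind with | _ a b => ?_
  have hω' : ∀ x ∈ G.neighborSet w \ {v}, ω s(v, x) = ω s(w, x) := hN ▸ hω
  simp only [Set.mem_sdiff, mem_neighborSet, Set.mem_singleton_iff] at hω hω'
  have := G.ne_of_adj he
  simp only [Sym2.map_mk, Equiv.swap_apply_def, mem_edgeSet] at he ⊢
  split_ifs <;> subst_vars <;> grind [Adj.symm, Sym2.eq_swap]

end SimpleGraph

theorem weighted_twins_redundant_general
    {V : Type*} [Fintype V] [DecidableEq V] {c : ℕ}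
    (G : SimpleGraph V) [DecidableRel G.Adj] (ω : Sym2 V → ℚ)
    (k : ℕ) (χ : V → Fin c)
    (v w : V)
    (htwinN : G.neighborFinset v \ {w} = G.neighborFinset w \ {v})
    (htwinω : ∀ x ∈ G.neighborFinset v \ {w}, ω s(v, x) = ω s(w, x))
    (hcol : χ v = χ w)
    (hnone : ¬ ∃ χ' : V → Fin c, IsImprovingKNeighbor G ω k χ χ' ∧ v ∈ flipSet χ χ') :
    ¬ ∃ χt : V → Fin c, IsImprovingKNeighbor G ω k χ χt ∧ w ∈ flipSet χ χt := by
  rintro ⟨χt, hχt, hw⟩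
  have hN : G.AreTwins v w := by
    simpa [SimpleGraph.AreTwins] using congrArg ((↑) : Finset V → Set V) htwinN
  have hω : ∀ x ∈ G.neighborSet v \ {w}, ω s(v, x) = ω s(w, x) :=
    fun x hx => htwinω x (by simpa using hx)
  have hχ : χ ∘ hN.swapIso = χ := by
    rw [SimpleGraph.AreTwins.coe_swapIso, Equiv.comp_swap_eq_update, hcol,
      Function.update_eq_self, ← hcol, Function.update_eq_self]
  refine hnone ⟨χt ∘ hN.swapIso, hχt.comp_iso hN.swapIso (fun _ => hN.weight_map_swap hω) hχ, ?_⟩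
  simpa [hcol] using hw

/-- Let `v` and `w` be weighted twins with `χ v = χ w`. If no improving
`k`-neighbor of `χ` flips `v`, then no improving `k`-neighbor of `χ`
flips `w`. -/
theorem weighted_twins_redundant
    {V : Type*} [Fintype V] [DecidableEq V] {c : ℕ}
    (G : SimpleGraph V) [DecidableRel G.Adj] (ω : Sym2 V → ℚ)
    (k : ℕ) (hk : 1 ≤ k) (χ : V → Fin c)
    (v w : V)
    (htwinN : G.neighborFinset v \ {w} = G.neighborFinset w \ {v})
    (htwinω : ∀ x ∈ G.neighborFinset v \ {w}, ω s(v, x) = ω s(w, x))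
    (hcol : χ v = χ w)
    (hnone : ¬ ∃ χ' : V → Fin c, IsImprovingKNeighbor G ω k χ χ' ∧ v ∈ flipSet χ χ') :
    ¬ ∃ χt : V → Fin c, IsImprovingKNeighbor G ω k χ χt ∧ w ∈ flipSet χ χt :=
  weighted_twins_redundant_general G ω k χ v w htwinN htwinω hcol hnone
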